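/- Every group homomorphism from $SL_2(\mathbb{Z}/5)$ to $GL_2(\mathbb{Z}_2)$, the group of invertible $2 \times 2$ matrices over the ring of $2$-adic integers, is trivial. -/

import Mathlib

/-!
`SL₂(𝔽₅)` is generated by transvections, which have order `5`, so it suffices that `GL₂(ℤ₂)` has
no element of order `5`. Such an element `A` reduces to `1` modulo `2` because `|GL₂(𝔽₂)| = 6`
is prime to `5`. Then in `0 = A ^ 5 - 1 = (A - 1)(1 + A + ⋯ + A ⁴)` the second factor reduces
to `5 = 1` modulo `2`, so it is invertible and `A = 1`.
-/

open Matrix Finset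

namespace Matrix.GeneralLinearGroup

variable {n R S : Type*} [Fintype n] [DecidableEq n] [CommRing R] [CommRing S]

theorem eq_one_of_pow_eq_one_of_map_eq_one (φ : R →+* S) [IsLocalHom φ] {m : ℕ}
    (hm : IsUnit (m : S)) {g : GL n R} (hg : g ^ m = 1) (hφg : map φ g = 1) : g = 1 := by
  set A : Matrix n n R := g.val
  set U : Matrix n n R := ∑ i ∈ range m, A ^ i
  have hAU : (A - 1) * U = 0 := by
    rw [mul_geom_sum, ← Units.val_pow_eq_pow_val, hg, Units.val_one, sub_self]
  have hφA : φ.mapMatrix A = 1 := congrArg Units.val hφg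
  have hφU : φ.mapMatrix U = m := by simp [U, map_sum, map_pow, hφA]
  have hU : IsUnit U := by
    rw [isUnit_iff_isUnit_det]
    refine isUnit_of_map_unit φ _ ?_
    rw [RingHom.map_det, hφU, ← diagonal_natCast, det_diagonal, prod_const]
    exact hm.pow _
  exact Units.ext (sub_eq_zero.mp (hU.mul_left_eq_zero.mp hAU))

end Matrix.GeneralLinearGroup

namespace Matrix.SpecialLinearGroup

variable {ι F : Type*} [Fintype ι] [DecidableEq ι] [CommRing F]

theorem transvection_pow {i j : ι} (hij : i ≠ j) (b : F) (k : ℕ) :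
    transvection hij b ^ k = transvection hij (k • b) := by
  induction k with
  | zero => simp
  | succ k ih => rw [pow_succ, ih, succ_nsmul, transvection_add]

theorem transvection_pow_char (p : ℕ) [CharP F p] {i j : ι} (hij : i ≠ j) (b : F) :
    transvection hij b ^ p = 1 := by
  rw [transvection_pow, nsmul_eq_mul, CharP.cast_eq_zero, zero_mul, transvection_coeff_zero]

end Matrix.SpecialLinearGroup

theorem Matrix.SL2.monoidHom_eq_one_of_pow_char_eq_one {F G : Type*} [Field F] [Group G]
    (p : ℕ) [CharP F p] (hG : ∀ g : G, g ^ p = 1 → g = 1)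
    (f : SpecialLinearGroup (Fin 2) F →* G) : f = 1 := by
  ext A
  induction A using SL2.transvection_induction with
  | htransvec i j hij c =>
    exact hG _ (by rw [← map_pow, SpecialLinearGroup.transvection_pow_char, map_one])
  | hmul A B hA hB => simp [hA, hB]

instance PadicInt.isLocalHom_toZMod {p : ℕ} [Fact p.Prime] :
    IsLocalHom (PadicInt.toZMod (p := p)) := by
  rw [PadicInt.toZMod_eq_residueField_comp_residue]
  infer_instance

theorem Matrix.GL_two_padicInt_two_eq_one_of_pow_five_eq_one {g : GL (Fin 2) ℤ_[2]}
    (hg : g ^ 5 = 1) : g = 1 := by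
  have hcard : (Nat.card (GL (Fin 2) (ZMod 2))).Coprime 5 := by
    rw [card_GL_field]
    decide
  refine GeneralLinearGroup.eq_one_of_pow_eq_one_of_map_eq_one PadicInt.toZMod (m := 5)
    (by decide) hg ?_
  exact hcard.pow_left_bijective.injective (by rw [← map_pow, hg, map_one, one_pow])

/-- Every group homomorphism from `SL₂(ℤ/5)` to `GL₂(ℤ₂)`, the group of
invertible `2 × 2` matrices over the `2`-adic integers, is trivial. -/
theorem SL2_ZMod5_hom_to_GL2_Zp2_trivial
    (f : Matrix.SpecialLinearGroup (Fin 2) (ZMod 5) →*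
      Matrix.GeneralLinearGroup (Fin 2) ℤ_[2]) : f = 1 :=
  haveI : Fact (Nat.Prime 5) := ⟨by norm_num⟩
  SL2.monoidHom_eq_one_of_pow_char_eq_one (F := ZMod 5) 5
    (fun _ => GL_two_padicInt_two_eq_one_of_pow_five_eq_one) f
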